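/- Let (X,d) be a compact metric space. Then lim_{ε→0} dim_ε(X,d) = dim(X), where dim is the topological (covering) dimension. -/
import Mathlib


open Set Filter Topology

/-- `covDimLE X n`: every finite open cover of `X` admits a finite open refinement
of order at most `n` (i.e. each point lies in at most `n+1` members). -/
def covDimLE (X : Type) [TopologicalSpace X] (n : ℕ) : Prop :=
  ∀ (ι : Type) (U : ι → Set X), Finite ι → (∀ i, IsOpen (U i)) → (⋃ i, U i) = Set.univ →
    ∃ (κ : Type) (V : κ → Set X), Finite κ ∧ (∀ j, IsOpen (V j)) ∧ (⋃ j, V j) = Set.univ ∧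
      (∀ j, ∃ i, V j ⊆ U i) ∧ ∀ x : X, Set.ncard {j | x ∈ V j} ≤ n + 1

/-- The topological (covering) dimension of `X`, as an element of `ENNReal`
(`⊤` if no finite bound exists). -/
noncomputable def topDim (X : Type) [TopologicalSpace X] : ENNReal :=
  sInf {d : ENNReal | ∃ n : ℕ, d = n ∧ covDimLE X n}

/-- `ε`-injectivity of `f` with respect to a distance function `ρ` on the source. -/
def IsEpsInj {X P : Type} (ρ : X → X → ℝ) (ε : ℝ) (f : X → P) : Prop :=
  ∀ x y, f x = f y → ρ x y ≤ ε

/-- The `ε`-width dimension `dim_ε(X, ρ)`: the infimum of topological dimensions of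
compact metric spaces `P` admitting an `ε`-injective continuous map `X → P`. -/
noncomputable def dimEps (X : Type) [TopologicalSpace X] (ρ : X → X → ℝ) (ε : ℝ) : ENNReal :=
  sInf {d : ENNReal | ∃ (P : Type) (_ : MetricSpace P) (f : X → P),
    CompactSpace P ∧ Continuous f ∧ IsEpsInj ρ ε f ∧ topDim P = d}

section Aux
open Metric

lemma covDimLE_mono {X : Type} [TopologicalSpace X] {n m : ℕ} (hnm : n ≤ m)
    (h : covDimLE X n) : covDimLE X m := by
  intro ι U hfin hop hcov
  obtain ⟨κ, V, h1, h2, h3, h4, h5⟩ := h ι U hfin hop hcov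
  exact ⟨κ, V, h1, h2, h3, h4, fun x => (h5 x).trans (by omega)⟩

lemma covDimLE_of_isEmpty {X : Type} [TopologicalSpace X] [IsEmpty X] (n : ℕ) :
    covDimLE X n := by
  intro ι U hfin hop hcov
  exact ⟨ι, U, hfin, hop, hcov, fun i => ⟨i, subset_rfl⟩, fun x => (IsEmpty.false x).elim⟩

lemma topDim_le_coe {X : Type} [TopologicalSpace X] {n : ℕ} (h : covDimLE X n) :
    topDim X ≤ n := sInf_le ⟨n, rfl, h⟩

lemma coe_le_topDim {X : Type} [TopologicalSpace X] {n : ℕ} (h : ¬ covDimLE X n) :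
    ((n : ENNReal) + 1) ≤ topDim X := by
  refine le_sInf fun d hd => ?_
  obtain ⟨m, rfl, hm⟩ := hd
  have : n < m := by
    by_contra hc
    exact h (covDimLE_mono (by omega) hm)
  calc (n : ENNReal) + 1 = ((n + 1 : ℕ) : ENNReal) := by push_cast; ring
    _ ≤ m := by exact_mod_cast this

lemma dimEps_le_topDim {X : Type} [MetricSpace X] [CompactSpace X] {ε : ℝ} (hε : 0 ≤ ε) :
    dimEps X (fun x y => dist x y) ε ≤ topDim X := by
  refine sInf_le ⟨X, inferInstance, id, inferInstance, continuous_id, ?_, rfl⟩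
  intro x y hxy
  simp only [id] at hxy
  simp [hxy, hε]

lemma key {X : Type} [MetricSpace X] [CompactSpace X] {n : ℕ} (h : ¬ covDimLE X n) :
    ∃ L > (0:ℝ), ∀ ε : ℝ, 0 < ε → ε < L → ∀ (P : Type) (_ : MetricSpace P) (f : X → P),
      CompactSpace P → Continuous f → IsEpsInj (fun x y => dist x y) ε f →
        ¬ covDimLE P n := by
  have hXne : Nonempty X := by
    by_contra hne
    rw [not_nonempty_iff] at hne
    exact h (covDimLE_of_isEmpty n)
  rw [covDimLE] at h
  push_neg at h
  obtain ⟨ι, U, hfin, hop, hcov, hno⟩ := h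
  -- Lebesgue number
  obtain ⟨L, hL, hLeb⟩ := lebesgue_number_lemma_of_metric isCompact_univ hop hcov.ge
  refine ⟨L, hL, fun ε hε hεL P instP f hPc hfc hinj hP => ?_⟩
  -- find δ > 0 with dist (f x) (f y) < δ → dist x y < L
  have hδ : ∃ δ > (0:ℝ), ∀ x y : X, dist (f x) (f y) < δ → dist x y < L := by
    set K : Set (X × X) := {p | L ≤ dist p.1 p.2} with hK
    have hKc : IsCompact K := (isClosed_le continuous_const continuous_dist).isCompact
    rcases K.eq_empty_or_nonempty with hKe | hKne
    · refine ⟨1, one_pos, fun x y _ => ?_⟩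
      by_contra hc
      push_neg at hc
      exact absurd hKe (Set.nonempty_iff_ne_empty.mp ⟨(x, y), hc⟩)
    · obtain ⟨z, hzK, hzmin⟩ := hKc.exists_isMinOn hKne
        ((hfc.comp continuous_fst).dist (hfc.comp continuous_snd)).continuousOn
      refine ⟨dist (f z.1) (f z.2), ?_, fun x y hxy => ?_⟩
      · rcases lt_or_eq_of_le (dist_nonneg : (0:ℝ) ≤ dist (f z.1) (f z.2)) with h' | h'
        · exact h'
        · exfalso
          have : f z.1 = f z.2 := by
            rw [← dist_eq_zero]; exact h'.symm
          have := hinj z.1 z.2 this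
          simp only at this
          exact absurd hzK (by simp [hK]; linarith)
      · by_contra hc
        push_neg at hc
        have : (x, y) ∈ K := hc
        exact absurd (hzmin this) (by simp [hxy.not_ge])
  obtain ⟨δ, hδ0, hδ⟩ := hδ
  -- finite subcover of P by balls of radius δ/2
  have hcov' : (univ : Set P) ⊆ ⋃ p : P, ball p (δ/2) := fun q _ =>
    mem_iUnion.mpr ⟨q, mem_ball_self (by linarith)⟩
  obtain ⟨t, ht⟩ := isCompact_univ.elim_finite_subcover (fun p : P => ball p (δ/2))
    (fun p => isOpen_ball) hcov'
  -- apply covDimLE P n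
  obtain ⟨κ, V, hκfin, hVop, hVcov, hVref, hVord⟩ :=
    hP {p : P // p ∈ t} (fun p => ball p.1 (δ/2)) inferInstance (fun p => isOpen_ball)
      (by
        apply eq_univ_of_univ_subset
        intro q hq
        obtain ⟨p, hp, hq'⟩ := by simpa using ht (mem_univ q)
        exact mem_iUnion.mpr ⟨⟨p, hp⟩, hq'⟩)
  -- build refinement of U on X
  obtain ⟨x₀⟩ := hXne
  have hι : ∃ i₀ : ι, True := by
    have : x₀ ∈ ⋃ i, U i := hcov ▸ mem_univ x₀
    obtain ⟨i, _⟩ := mem_iUnion.mp this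
    exact ⟨i, trivial⟩
  obtain ⟨i₀, -⟩ := hι
  have hcov2 : (⋃ j, f ⁻¹' V j) = univ := by
    rw [← preimage_iUnion, hVcov, preimage_univ]
  have href : ∀ j, ∃ i, f ⁻¹' V j ⊆ U i := by
    intro j
    rcases (f ⁻¹' V j).eq_empty_or_nonempty with he | ⟨y₀, hy₀⟩
    · exact ⟨i₀, by rw [he]; exact empty_subset _⟩
    · obtain ⟨i, hi⟩ := hLeb y₀ (mem_univ y₀)
      refine ⟨i, fun x hx => hi ?_⟩
      obtain ⟨p, hp⟩ := hVref j
      have h1 : f x ∈ ball p.1 (δ/2) := hp hx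
      have h2 : f y₀ ∈ ball p.1 (δ/2) := hp hy₀
      have : dist (f x) (f y₀) < δ := by
        calc dist (f x) (f y₀) ≤ dist (f x) p.1 + dist p.1 (f y₀) := dist_triangle _ _ _
          _ < δ/2 + δ/2 := by
              rw [mem_ball] at h1 h2
              rw [dist_comm p.1 (f y₀)]; linarith
          _ = δ := by ring
      have := hδ x y₀ this
      rw [mem_ball]
      exact this
  obtain ⟨x, hx⟩ := hno κ (fun j => f ⁻¹' V j) hκfin (fun j => (hVop j).preimage hfc)
    hcov2 href
  exact absurd (hVord (f x)) (not_le.mpr hx)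

end Aux

/-- `dim_ε(X,d) → dim(X)` as `ε → 0⁺`. -/
theorem stmt3 {X : Type} [MetricSpace X] [CompactSpace X] :
    Filter.Tendsto (fun ε : ℝ => dimEps X (fun x y => dist x y) ε)
      (nhdsWithin 0 (Set.Ioi 0)) (nhds (topDim X)) := by
  classical
  rw [tendsto_order]
  constructor
  · intro b hb
    -- find n with ¬ covDimLE X n and b < n + 1
    have hn : ∃ n : ℕ, (b : ENNReal) < (n : ENNReal) + 1 ∧ ¬ covDimLE X n := by
      by_cases hA : ∃ m : ℕ, covDimLE X m
      · obtain ⟨m, hm⟩ := hA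
        set m₀ := Nat.find ⟨m, hm⟩ with hm₀def
        have hm₀ : covDimLE X m₀ := Nat.find_spec ⟨m, hm⟩
        have hle : topDim X ≤ m₀ := topDim_le_coe hm₀
        have hbm : b < (m₀ : ENNReal) := lt_of_lt_of_le hb hle
        have hm₀0 : m₀ ≠ 0 := by
          intro h0
          rw [h0] at hbm
          simp at hbm
        refine ⟨m₀ - 1, ?_, Nat.find_min ⟨m, hm⟩ (by omega)⟩
        have h1 : m₀ - 1 + 1 = m₀ := by omega
        have : ((m₀ - 1 : ℕ) : ENNReal) + 1 = (m₀ : ENNReal) := by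
          conv_rhs => rw [← h1]
          push_cast
          ring
        rw [this]; exact hbm
      · push_neg at hA
        obtain ⟨k, hk⟩ := ENNReal.exists_nat_gt hb.ne_top
        exact ⟨k, hk.trans_le (le_self_add), hA k⟩
    obtain ⟨n, hbn, hXn⟩ := hn
    obtain ⟨L, hL0, hkey⟩ := key hXn
    filter_upwards [Ioo_mem_nhdsGT_of_mem (by constructor <;> simp [hL0] : (0:ℝ) ∈ Ico 0 L)]
      with ε hε
    refine lt_of_lt_of_le hbn ?_
    refine le_sInf fun d hd => ?_
    obtain ⟨P, instP, f, hPc, hfc, hinj, rfl⟩ := hd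
    have := hkey ε hε.1 hε.2 P instP f hPc hfc hinj
    exact coe_le_topDim this
  · intro b hb
    filter_upwards [self_mem_nhdsWithin] with ε hε
    exact lt_of_le_of_lt (dimEps_le_topDim (le_of_lt hε)) hb
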